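/- No new eating neighbours for a continuing hungry top vertex: if ā(j) = h = ā'(j), j ∈ top(D), and ā' = f_S(ā, b̄, g_H(D, ā)) componentwise, then the set of eating neighbours of j under ā' is a subset of the set of eating neighbours of j under ā. -/
import Mathlib


inductive Act : Type
  | t | h | e
deriving DecidableEq, Repr

def switch : Act → Act
  | Act.t => Act.h
  | Act.h => Act.e
  | Act.e => Act.t

def fP (a : Act) (b : Bool) : Act := if b then switch a else a

inductive Cmd : Type
  | pass | force (b : Bool)
deriving DecidableEq

def fS (a : Act) (b : Bool) : Cmd → Act
  | Cmd.pass => fP a b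
  | Cmd.force b' => fP a b'

/-- The updated priority relation `dH D a`: edge `j ↦ k` of `D` is reversed when
`a j = e`, or when `a j = t` and `a k = h`; otherwise kept. -/
def dH {V : Type*} (D : V → V → Prop) (a : V → Act) : V → V → Prop :=
  fun j k =>
    (D j k ∧ ¬ (a j = Act.e ∨ (a j = Act.t ∧ a k = Act.h))) ∨
    (D k j ∧ (a k = Act.e ∨ (a k = Act.t ∧ a j = Act.h)))

/-- `D` is a priority map for `E`: it orients each edge of `E` exactly one way. -/
def IsPriorityMap {V : Type*} (E D : V → V → Prop) : Prop :=
  (∀ j k, D j k → E j k) ∧ (∀ j k, E j k → (D j k ↔ ¬ D k j))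

def topD {V : Type*} (E D : V → V → Prop) (j : V) : Prop := ∀ k, E j k → D j k

def ready {V : Type*} (E D : V → V → Prop) (a : V → Act) (j : V) : Prop :=
  a j = Act.h ∧ topD E D j ∧ ∀ k, E j k → a k ≠ Act.e

open scoped Classical in
noncomputable def gH {V : Type*} (E D : V → V → Prop) (a : V → Act) (j : V) : Cmd :=
  if a j = Act.t ∨ a j = Act.e then Cmd.pass
  else if ready E D a j then Cmd.force true else Cmd.force false

/-- One step of the polled dynamics of the philosophers under the hub controller. -/
noncomputable def nextA {V : Type*} (E D : V → V → Prop) (a : V → Act) (b : V → Bool) :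
    V → Act :=
  fun j => fS (a j) (b j) (gH E D a j)

def safe {V : Type*} (E : V → V → Prop) (a : V → Act) : Prop :=
  ∀ j k, E j k → ¬ (a j = Act.e ∧ a k = Act.e)

def Acyclic {V : Type*} (D : V → V → Prop) : Prop :=
  ∀ j, ¬ Relation.TransGen D j j

theorem no_new_eating_neighbours {V : Type*} (E D : V → V → Prop)
    (hE_symm : ∀ j k, E j k → E k j) (hD : IsPriorityMap E D)
    (a : V → Act) (b : V → Bool) (j : V)
    (hj : a j = Act.h) (hj' : nextA E D a b j = Act.h)
    (htop : topD E D j) :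
    ∀ k, E j k → nextA E D a b k = Act.e → a k = Act.e := by
  intro k hjk hke
  by_contra hk
  cases hak : a k with
  | t =>
    cases hb : b k <;> simp [nextA, fS, gH, hak, fP, hb, switch] at hke
  | e => exact hk hak
  | h =>
    have hready : ready E D a k := by
      by_contra hr
      simp [nextA, fS, gH, hak, hr, fP] at hke
    have hDkj : D k j := hready.2.1 j (hE_symm j k hjk)
    have hDjk : D j k := htop k hjk
    exact ((hD.2 j k hjk).mp hDjk) hDkj
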